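/- arXiv:0901.1762 — 2 statements merged into one kernel-verified Lean document; each statement's English description precedes it below -/
import Mathlib

section
/- For every fixed nonnegative integer k, the limit as n → ∞ of S(n, k) equals ∏_{i=1}^{k} (1 - 2^{-i})^{-1}, where S(ω,l) = Σ_{0 ≤ i₁ ≤ ⋯ ≤ i_l ≤ ω} 2^{-(i₁+⋯+i_l)}. -/
/-- `S ω l` = sum over all nondecreasing tuples `0 ≤ i₁ ≤ ⋯ ≤ i_l ≤ ω`
of `2^{-(i₁+⋯+i_l)}`, with `S ω 0 = 1`. -/
noncomputable def S (ω l : ℕ) : ℝ := by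
  classical
  exact ∑ f ∈ Finset.univ.filter (fun f : Fin l → Fin (ω + 1) => Monotone f),
    (1 / 2 : ℝ) ^ (∑ i, (f i : ℕ))

/-!
Write `q = 1/2`. Splitting the tuples of `S (n+1) (k+1)` according to whether `i₁ = 0` (then drop
`i₁`) or not (then lower every entry by one) gives the recursion
`S (n+1) (k+1) = S (n+1) k + q^(k+1) S n (k+1)`. For fixed `k` the sequence `S n k` is monotone in
`n` and bounded by `2^k`, hence convergent; passing to the limit in the recursion gives
`L_{k+1} = L_k + q^(k+1) L_{k+1}`, i.e. `L_{k+1} = L_k (1 - q^(k+1))⁻¹`, and `L_0 = 1`.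
-/

open Finset Filter Topology

lemma Fin.monotone_cons_zero_iff {n m : ℕ} {g : Fin n → Fin (m + 1)} :
    Monotone (Fin.cons 0 g : Fin (n + 1) → Fin (m + 1)) ↔ Monotone g := by
  simpa [Relator.LiftFun, ← monotone_iff_forall_lt] using
    Fin.liftFun_cons (r := (· ≤ ·)) (a := (0 : Fin (m + 1))) (f := g)

lemma Fin.monotone_succ_comp_iff {α : Type*} [Preorder α] {m : ℕ} {g : α → Fin m} :
    Monotone (Fin.succ ∘ g) ↔ Monotone g :=
  ⟨fun h _ _ hab => Fin.succ_le_succ_iff.mp (h hab),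
    fun h _ _ hab => Fin.succ_le_succ_iff.mpr (h hab)⟩

namespace S

lemma eq_sum (ω l : ℕ) : S ω l = ∑ f ∈ univ.filter (fun f : Fin l → Fin (ω + 1) => Monotone f),
    (1 / 2 : ℝ) ^ (∑ i, (f i : ℕ)) := rfl

lemma zero_right (ω : ℕ) : S ω 0 = 1 := by
  simp [eq_sum, Subsingleton.monotone]

lemma monotone_left (l : ℕ) : Monotone (fun ω => S ω l) := by
  refine monotone_nat_of_le_succ fun ω => ?_
  have hinj :
      Function.Injective (Fin.castSucc ∘ · : (Fin l → Fin (ω + 1)) → Fin l → Fin (ω + 2)) :=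
    fun f g h => funext fun x => Fin.castSucc_injective _ (congrFun h x)
  calc S ω l = ∑ f ∈ (univ.filter fun f : Fin l → Fin (ω + 1) => Monotone f).map ⟨_, hinj⟩,
        (1 / 2 : ℝ) ^ (∑ i, (f i : ℕ)) := by simp [eq_sum]
    _ ≤ S (ω + 1) l := by
      refine sum_le_sum_of_subset_of_nonneg ?_ fun _ _ _ => by positivity
      intro f hf
      simp only [Finset.mem_map, mem_filter, mem_univ, true_and] at hf ⊢
      obtain ⟨g, hg, rfl⟩ := hf
      exact Fin.strictMono_castSucc.monotone.comp hg

lemma le_two_pow (ω l : ℕ) : S ω l ≤ 2 ^ l := by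
  calc S ω l ≤ ∑ f : Fin l → Fin (ω + 1), (1 / 2 : ℝ) ^ (∑ i, (f i : ℕ)) :=
        sum_le_sum_of_subset_of_nonneg (filter_subset _ _) fun _ _ _ => by positivity
    _ = ∏ _i : Fin l, ∑ j : Fin (ω + 1), (1 / 2 : ℝ) ^ (j : ℕ) := by
        rw [Fintype.prod_sum]
        simp_rw [prod_pow_eq_pow_sum]
    _ ≤ 2 ^ l := by
        rw [Fin.sum_univ_eq_sum_range (fun j => (1 / 2 : ℝ) ^ j), prod_const, card_univ,
          Fintype.card_fin]
        gcongr
        exact sum_geometric_two_le _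

lemma sum_monotone_head_eq_zero (n k : ℕ) :
    ∑ f ∈ univ.filter (fun f : Fin (k + 1) → Fin (n + 2) => Monotone f ∧ f 0 = 0),
      (1 / 2 : ℝ) ^ (∑ i, (f i : ℕ)) = S (n + 1) k := by
  refine (sum_nbij (Fin.cons 0) ?_ (Fin.cons_right_injective 0).injOn ?_ ?_).symm
  · intro g hg
    simp only [mem_filter, mem_univ, true_and] at hg ⊢
    exact ⟨Fin.monotone_cons_zero_iff.2 hg, Fin.cons_zero _ _⟩
  · rintro f hf
    simp only [coe_filter, mem_univ, true_and, Set.mem_ofPred_eq] at hf ⊢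
    have hf' : Fin.cons 0 (Fin.tail f) = f := by rw [← hf.2]; exact Fin.cons_self_tail f
    exact ⟨Fin.tail f, Fin.monotone_cons_zero_iff.1 (by rw [hf']; exact hf.1), hf'⟩
  · intro g _
    simp [Fin.sum_univ_succ]

lemma sum_monotone_head_ne_zero (n k : ℕ) :
    ∑ f ∈ univ.filter (fun f : Fin (k + 1) → Fin (n + 2) => Monotone f ∧ ¬f 0 = 0),
      (1 / 2 : ℝ) ^ (∑ i, (f i : ℕ)) = (1 / 2) ^ (k + 1) * S n (k + 1) := by
  have hinj : Function.Injective (Fin.succ ∘ · : (Fin (k + 1) → Fin (n + 1)) → _) :=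
    fun f g h => funext fun x => Fin.succ_injective _ (congrFun h x)
  rw [eq_sum, mul_sum]
  refine (sum_nbij (Fin.succ ∘ ·) ?_ hinj.injOn ?_ ?_).symm
  · intro g hg
    simp only [mem_filter, mem_univ, true_and] at hg ⊢
    exact ⟨Fin.monotone_succ_comp_iff.2 hg, Fin.succ_ne_zero _⟩
  · rintro f hf
    simp only [coe_filter, mem_univ, true_and, Set.mem_ofPred_eq] at hf ⊢
    have hne : ∀ x, f x ≠ 0 := fun x h0 =>
      hf.2 (nonpos_iff_eq_zero.1 (h0 ▸ hf.1 (Fin.zero_le x)))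
    have hf' : Fin.succ ∘ (fun x => (f x).pred (hne x)) = f := funext fun x => Fin.succ_pred _ _
    exact ⟨_, Fin.monotone_succ_comp_iff.1 (by rw [hf']; exact hf.1), hf'⟩
  · intro g _
    simp [sum_add_distrib, pow_add, mul_comm]

lemma succ_succ (n k : ℕ) : S (n + 1) (k + 1) = S (n + 1) k + (1 / 2) ^ (k + 1) * S n (k + 1) := by
  rw [eq_sum, ← sum_filter_add_sum_filter_not _ (fun f => f 0 = 0), filter_filter, filter_filter,
    sum_monotone_head_eq_zero, sum_monotone_head_ne_zero]

lemma tendsto_iSup (l : ℕ) : Tendsto (fun ω => S ω l) atTop (𝓝 (⨆ ω, S ω l)) :=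
  tendsto_atTop_ciSup (monotone_left l) ⟨2 ^ l, by rintro _ ⟨ω, rfl⟩; exact le_two_pow ω l⟩

end S

theorem stmt_2 (k : ℕ) :
    Filter.Tendsto (fun n : ℕ => S n k) Filter.atTop
      (nhds (∏ i ∈ Finset.Icc 1 k, (1 - (1 / 2 : ℝ) ^ i)⁻¹)) := by
  induction k with
  | zero => simp [S.zero_right]
  | succ k ih =>
    set P := ∏ i ∈ Icc 1 k, (1 - (1 / 2 : ℝ) ^ i)⁻¹
    set q : ℝ := (1 / 2) ^ (k + 1)
    obtain ⟨L, hL⟩ : ∃ L, Tendsto (fun n => S n (k + 1)) atTop (𝓝 L) := ⟨_, S.tendsto_iSup _⟩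
    have hfix : L = P + q * L := by
      refine tendsto_nhds_unique (hL.comp (tendsto_add_atTop_nat 1)) ?_
      simpa only [Function.comp_def, S.succ_succ] using
        (ih.comp (tendsto_add_atTop_nat 1)).add (hL.const_mul q)
    have hq : q < 1 := pow_lt_one₀ (by norm_num) (by norm_num) (Nat.succ_ne_zero k)
    have hL_eq : L = P * (1 - q)⁻¹ := by
      rw [eq_mul_inv_iff_mul_eq₀ (sub_ne_zero.2 hq.ne')]
      linear_combination hfix
    rwa [prod_Icc_succ_top (Nat.le_add_left 1 k), ← hL_eq]
end

section
/- Define ζ(η,ω,k) = S(ω, k−ω) · 2^{−(k−ω)(η−ω)} · ∏_{i=1}^{ω} (1 − 2^{−(η+1−i)}) for integers 0 ≤ ω ≤ min{η,k}. Then ζ satisfies the recursion ζ(η, ω, k+1) = ζ(η, ω−1, k)·(1 − 2^{−(η−ω+1)}) + ζ(η, ω, k)·2^{−(η−ω)} for all 1 ≤ ω ≤ min{η, k+1} with ω ≤ k+1 (interpreting ζ(η,ω,k)=0 when ω>k). -/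
/-- `ζ(η,ω,k) = S(ω,k−ω)·2^{−(k−ω)(η−ω)}·∏_{i=1}^{ω}(1−2^{−(η+1−i)})` for `ω ≤ k`,
and `0` when `ω > k`. -/
noncomputable def zeta (η ω k : ℕ) : ℝ :=
  if ω ≤ k then
    S ω (k - ω) * (1 / 2 : ℝ) ^ ((k - ω) * (η - ω)) *
      ∏ i ∈ Finset.Icc 1 ω, (1 - (1 / 2 : ℝ) ^ (η + 1 - i))
  else 0

/-!
Splitting the nondecreasing tuples counted by `S (ω + 1) (l + 1)` according to whether the
first entry is `0` gives `S (ω + 1) (l + 1) = S (ω + 1) l + 2^{-(l+1)} S ω (l + 1)`: drop the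
leading zero, or lower every entry by one. Substituted into the closed form of `ζ`, this is the
recursion; in the boundary case `ω = k + 1` only the last factor of the product is peeled off.
-/

open Finset

lemma Fin.monotone_cons {α : Type*} [Preorder α] {n : ℕ} {a : α} {f : Fin n → α} :
    Monotone (Fin.cons a f : Fin (n + 1) → α) ↔ (∀ i, a ≤ f i) ∧ Monotone f := by
  simp only [monotone_iff_forall_lt]
  exact Fin.liftFun_cons (· ≤ ·)

lemma filter_monotone_head_eq_zero (l n : ℕ)
    [DecidablePred (Monotone : (Fin (l + 1) → Fin (n + 1)) → Prop)]
    [DecidablePred (Monotone : (Fin l → Fin (n + 1)) → Prop)] :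
    {f ∈ univ.filter (Monotone : (Fin (l + 1) → Fin (n + 1)) → Prop) | f 0 = 0} =
      (univ.filter (Monotone : (Fin l → Fin (n + 1)) → Prop)).image (Fin.cons 0) := by
  ext f
  simp only [mem_filter, mem_univ, true_and, mem_image]
  constructor
  · rintro ⟨hf, hf0⟩
    refine ⟨Fin.tail f, hf.comp Fin.strictMono_succ.monotone, ?_⟩
    rw [← hf0, Fin.cons_self_tail]
  · rintro ⟨g, hg, rfl⟩
    exact ⟨Fin.monotone_cons.mpr ⟨fun i => Fin.zero_le _, hg⟩, rfl⟩

lemma filter_monotone_head_ne_zero (l n : ℕ)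
    [DecidablePred (Monotone : (Fin (l + 1) → Fin (n + 2)) → Prop)]
    [DecidablePred (Monotone : (Fin (l + 1) → Fin (n + 1)) → Prop)] :
    {f ∈ univ.filter (Monotone : (Fin (l + 1) → Fin (n + 2)) → Prop) | ¬f 0 = 0} =
      (univ.filter (Monotone : (Fin (l + 1) → Fin (n + 1)) → Prop)).image (Fin.succ ∘ ·) := by
  ext f
  simp only [mem_filter, mem_univ, true_and, mem_image]
  constructor
  · rintro ⟨hf, hf0⟩
    have hne (i : Fin (l + 1)) : f i ≠ 0 :=
      Fin.pos_iff_ne_zero.mp ((Fin.pos_iff_ne_zero.mpr hf0).trans_le (hf (Fin.zero_le i)))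
    refine ⟨fun i => (f i).pred (hne i), fun i j hij => ?_, funext fun i => Fin.succ_pred _ _⟩
    exact Fin.pred_le_pred_iff.mpr (hf hij)
  · rintro ⟨g, hg, rfl⟩
    exact ⟨Fin.strictMono_succ.monotone.comp hg, Fin.succ_ne_zero _⟩

lemma S_zero_right (ω : ℕ) : S ω 0 = 1 := by
  rw [S, filter_true_of_mem fun f _ => Subsingleton.monotone f]
  simp

lemma S_succ_succ (ω l : ℕ) :
    S (ω + 1) (l + 1) = (1 / 2 : ℝ) ^ (l + 1) * S ω (l + 1) + S (ω + 1) l := by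
  classical
  rw [S, S, S, ← sum_filter_add_sum_filter_not _ (fun f => f 0 = 0), add_comm,
    filter_monotone_head_eq_zero, filter_monotone_head_ne_zero,
    sum_image (Fin.cons_right_injective 0).injOn,
    sum_image (Fin.succ_injective _).comp_left.injOn, mul_sum]
  congr 1
  · refine sum_congr rfl fun g _ => ?_
    simp [Fin.val_succ, sum_add_distrib, pow_add, mul_comm]
  · simp [Fin.sum_univ_succ]

lemma zeta_self_add (η ω l : ℕ) :
    zeta η ω (ω + l) =
      S ω l * (1 / 2 : ℝ) ^ (l * (η - ω)) * ∏ i ∈ Icc 1 ω, (1 - (1 / 2 : ℝ) ^ (η + 1 - i)) := by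
  simp [zeta]

lemma zeta_of_lt {η ω k : ℕ} (h : k < ω) : zeta η ω k = 0 :=
  if_neg h.not_ge

theorem stmt_3 (η ω k : ℕ) (hω1 : 1 ≤ ω) (hωη : ω ≤ η) (hωk : ω ≤ k + 1) :
    zeta η ω (k + 1) =
      zeta η (ω - 1) k * (1 - (1 / 2 : ℝ) ^ (η - ω + 1)) +
        zeta η ω k * (1 / 2 : ℝ) ^ (η - ω) := by
  obtain ⟨ω, rfl⟩ := Nat.exists_eq_add_of_le' hω1
  obtain ⟨l, rfl⟩ := Nat.exists_eq_add_of_le (Nat.le_of_succ_le_succ hωk)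
  have hprod : ∏ i ∈ Icc 1 (ω + 1), (1 - (1 / 2 : ℝ) ^ (η + 1 - i)) =
      (∏ i ∈ Icc 1 ω, (1 - (1 / 2 : ℝ) ^ (η + 1 - i))) * (1 - (1 / 2 : ℝ) ^ (η - (ω + 1) + 1)) := by
    rw [prod_Icc_succ_top (Nat.le_add_left 1 ω), Nat.sub_add_comm hωη]
  have hexp : η - ω = η - (ω + 1) + 1 := by omega
  rw [Nat.add_sub_cancel]
  rcases l with _ | l
  · rw [zeta_of_lt (ω := ω + 1) (k := ω + 0) (by omega), zeta_self_add η ω 0,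
      show ω + 0 + 1 = ω + 1 + 0 from rfl, zeta_self_add]
    simp only [S_zero_right, zero_mul, pow_zero, one_mul, mul_one, hprod, add_zero]
  · rw [show ω + (l + 1) + 1 = ω + 1 + (l + 1) by ring, zeta_self_add, zeta_self_add,
      show ω + (l + 1) = ω + 1 + l by ring, zeta_self_add, S_succ_succ, hprod, hexp]
    ring
end
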